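/- Let C and D be V-dressed coalgebras. Then the tensor product E-bimodule C ⊗_E D, equipped with Δ(c ⊗_E d) = Σ_{(c),(d)} (c_{(1)} ⊗_E d_{(1)}) ⊗ (c_{(2)} ⊗_E d_{(2)}) and ε(c ⊗_E d) = Σ_{ν∈V} ε(cν) ε(νd), is a well-defined V-dressed coalgebra. -/

import Mathlib

open TensorProduct

section Dressed

variable (K : Type) [Field K] (V : Type) [Fintype V] [DecidableEq V]

/-- An `E`-bimodule structure on a `K`-vector space, where `E = R̊ ⊗ R` is the
span of the orthogonal idempotents `λ̊μ` (indexed by `V × V`): commuting unital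
left and right actions, encoded by the action operators of the idempotents. -/
structure EBim (C : Type) [AddCommGroup C] [Module K C] where
  /-- left action of the idempotent `λ̊μ` -/
  eL : V × V → C →ₗ[K] C
  /-- right action of the idempotent `λ̊μ` -/
  eR : V × V → C →ₗ[K] C
  eL_orth : ∀ p q : V × V, eL p ∘ₗ eL q = if p = q then eL p else 0
  eR_orth : ∀ p q : V × V, eR p ∘ₗ eR q = if p = q then eR p else 0
  eLR_comm : ∀ p q : V × V, eL p ∘ₗ eR q = eR q ∘ₗ eL p
  sum_eL : ∑ p : V × V, eL p = LinearMap.id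
  sum_eR : ∑ p : V × V, eR p = LinearMap.id

namespace EBim

variable {K V} {C : Type} [AddCommGroup C] [Module K C]

/-- left action of `λ̊` -/
def oL (B : EBim K V C) (l : V) : C →ₗ[K] C := ∑ m : V, B.eL (l, m)

/-- left action of the "plain" element `μ` -/
def pL (B : EBim K V C) (m : V) : C →ₗ[K] C := ∑ l : V, B.eL (l, m)

/-- right action of `λ̊` -/
def oR (B : EBim K V C) (l : V) : C →ₗ[K] C := ∑ m : V, B.eR (l, m)

/-- right action of the "plain" element `μ` -/
def pR (B : EBim K V C) (m : V) : C →ₗ[K] C := ∑ l : V, B.eR (l, m)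

end EBim

/-- A `V`-dressed coalgebra: a `K`-coalgebra with an `E`-bimodule structure
satisfying the compatibilities (9)–(11) of Hayashi's paper. -/
structure DressedStruct (C : Type) [AddCommGroup C] [Module K C]
    extends EBim K V C where
  comul : C →ₗ[K] C ⊗[K] C
  counit : C →ₗ[K] K
  coassoc : ∀ c : C,
    (TensorProduct.assoc K C C C) ((TensorProduct.map comul LinearMap.id) (comul c)) =
      (TensorProduct.map LinearMap.id comul) (comul c)
  counit_comul : ∀ c : C,
    (TensorProduct.lid K C) ((TensorProduct.map counit LinearMap.id) (comul c)) = c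
  comul_counit : ∀ c : C,
    (TensorProduct.rid K C) ((TensorProduct.map LinearMap.id counit) (comul c)) = c
  /-- `Δ(λ̊μ c λ̊'μ') = Σ λ̊ c₍₁₎ λ̊' ⊗ μ c₍₂₎ μ'` -/
  comul_act : ∀ (p q : V × V) (c : C),
    comul (eL p (eR q c)) =
      (TensorProduct.map (toEBim.oL p.1 ∘ₗ toEBim.oR q.1)
        (toEBim.pL p.2 ∘ₗ toEBim.pR q.2)) (comul c)
  /-- `Σ λ c₍₁₎ μ ⊗ c₍₂₎ = Σ c₍₁₎ ⊗ λ̊ c₍₂₎ μ̊` -/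
  exch : ∀ (l m : V) (c : C),
    (TensorProduct.map (toEBim.pL l ∘ₗ toEBim.pR m) LinearMap.id) (comul c) =
      (TensorProduct.map LinearMap.id (toEBim.oL l ∘ₗ toEBim.oR m)) (comul c)
  /-- `ε(λ̊ c μ̊) = ε(λ c μ)` -/
  counit_act : ∀ (l m : V) (c : C),
    counit (toEBim.oL l (toEBim.oR m c)) = counit (toEBim.pL l (toEBim.pR m c))

/-- `f` is a map of `V`-dressed coalgebras (a coalgebra map which is also an
`E`-bimodule map). -/
def IsDrMap {C D : Type} [AddCommGroup C] [Module K C] [AddCommGroup D] [Module K D]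
    (DC : DressedStruct K V C) (DD : DressedStruct K V D) (f : C →ₗ[K] D) : Prop :=
  (∀ c : C, DD.comul (f c) = (TensorProduct.map f f) (DC.comul c)) ∧
  (∀ c : C, DD.counit (f c) = DC.counit c) ∧
  (∀ (p : V × V) (c : C), f (DC.eL p c) = DD.eL p (f c)) ∧
  (∀ (p : V × V) (c : C), f (DC.eR p c) = DD.eR p (f c))

/-- The subspace of `C ⊗[K] D` by which one divides to obtain the tensor
product `C ⊗_E D` of `E`-bimodules. -/
noncomputable def dbal {C D : Type} [AddCommGroup C] [Module K C]
    [AddCommGroup D] [Module K D] (A : EBim K V C) (B : EBim K V D) :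
    Submodule K (C ⊗[K] D) :=
  Submodule.span K {z | ∃ (p : V × V) (c : C) (d : D),
    z = (A.eR p c) ⊗ₜ[K] d - c ⊗ₜ[K] (B.eL p d)}

/-- The underlying vector space of `C ⊗_E D`. -/
noncomputable abbrev DTensor {C D : Type} [AddCommGroup C] [Module K C]
    [AddCommGroup D] [Module K D] (A : EBim K V C) (B : EBim K V D) : Type :=
  (C ⊗[K] D) ⧸ dbal K V A B

/-- The defining formulas for the `V`-dressed coalgebra structure on the tensor
product `C ⊗_E D` of two `V`-dressed coalgebras:
`Δ(c ⊗_E d) = Σ (c₍₁₎ ⊗_E d₍₁₎) ⊗ (c₍₂₎ ⊗_E d₍₂₎)`,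
`ε(c ⊗_E d) = Σ_ν ε(cν) ε(νd)`, and the `E`-actions through the outer factors. -/
def IsDTensorStruct {C D : Type} [AddCommGroup C] [Module K C]
    [AddCommGroup D] [Module K D] (DC : DressedStruct K V C) (DD : DressedStruct K V D)
    (DT : DressedStruct K V (DTensor K V DC.toEBim DD.toEBim)) : Prop :=
  (∀ (c : C) (d : D),
    DT.comul ((dbal K V DC.toEBim DD.toEBim).mkQ (c ⊗ₜ[K] d)) =
      (TensorProduct.map (dbal K V DC.toEBim DD.toEBim).mkQ
          (dbal K V DC.toEBim DD.toEBim).mkQ)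
        ((TensorProduct.tensorTensorTensorComm K C C D D)
          (DC.comul c ⊗ₜ[K] DD.comul d))) ∧
  (∀ (c : C) (d : D),
    DT.counit ((dbal K V DC.toEBim DD.toEBim).mkQ (c ⊗ₜ[K] d)) =
      ∑ n : V, DC.counit (DC.toEBim.pR n c) * DD.counit (DD.toEBim.pL n d)) ∧
  (∀ (p : V × V) (c : C) (d : D),
    DT.eL p ((dbal K V DC.toEBim DD.toEBim).mkQ (c ⊗ₜ[K] d)) =
      (dbal K V DC.toEBim DD.toEBim).mkQ ((DC.eL p c) ⊗ₜ[K] d)) ∧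
  (∀ (p : V × V) (c : C) (d : D),
    DT.eR p ((dbal K V DC.toEBim DD.toEBim).mkQ (c ⊗ₜ[K] d)) =
      (dbal K V DC.toEBim DD.toEBim).mkQ (c ⊗ₜ[K] (DD.eR p d)))

/-- The `V`-dressed coalgebra `E` itself: the defining formulas on the
canonical basis `{λ̊μ}` of `E = V × V → K`. -/
def IsEStruct (D : DressedStruct K V (V × V → K)) : Prop :=
  (∀ p : V × V, D.comul (Pi.single p 1) =
    ∑ n : V, (Pi.single (p.1, n) 1 : V × V → K) ⊗ₜ[K] (Pi.single (n, p.2) 1 : V × V → K)) ∧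
  (∀ p : V × V, D.counit (Pi.single p 1) = if p.1 = p.2 then 1 else 0) ∧
  (∀ p q : V × V, D.eL p (Pi.single q 1) =
    if p = q then (Pi.single q 1 : V × V → K) else 0) ∧
  (∀ p q : V × V, D.eR p (Pi.single q 1) =
    if p = q then (Pi.single q 1 : V × V → K) else 0)

end Dressed
section AuxGeneric

variable {K : Type} [Field K]

open TensorProduct in
theorem tmap_sum_left {ι M N P Q : Type} [AddCommGroup M] [Module K M]
    [AddCommGroup N] [Module K N] [AddCommGroup P] [Module K P]
    [AddCommGroup Q] [Module K Q] (s : Finset ι) (f : ι → M →ₗ[K] P) (g : N →ₗ[K] Q) :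
    TensorProduct.map (∑ i ∈ s, f i) g = ∑ i ∈ s, TensorProduct.map (f i) g := by
  simp only [← TensorProduct.mapBilinear_apply (R := K), map_sum, LinearMap.sum_apply]

open TensorProduct in
theorem tmap_sum_right {ι M N P Q : Type} [AddCommGroup M] [Module K M]
    [AddCommGroup N] [Module K N] [AddCommGroup P] [Module K P]
    [AddCommGroup Q] [Module K Q] (s : Finset ι) (f : M →ₗ[K] P) (g : ι → N →ₗ[K] Q) :
    TensorProduct.map f (∑ i ∈ s, g i) = ∑ i ∈ s, TensorProduct.map f (g i) := by
  simp only [← TensorProduct.mapBilinear_apply (R := K), map_sum]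

open TensorProduct in
theorem tmap_sum_prod {ι κ M N P Q : Type} [Fintype ι] [Fintype κ] [AddCommGroup M] [Module K M]
    [AddCommGroup N] [Module K N] [AddCommGroup P] [Module K P]
    [AddCommGroup Q] [Module K Q] (f : ι → M →ₗ[K] P) (g : κ → N →ₗ[K] Q) :
    (∑ q : ι × κ, TensorProduct.map (f q.1) (g q.2)) =
      TensorProduct.map (∑ i, f i) (∑ j, g j) := by
  rw [tmap_sum_left, Fintype.sum_prod_type]
  exact Finset.sum_congr rfl fun i _ => (tmap_sum_right Finset.univ (f i) g).symm

set_option maxHeartbeats 2000000 in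
set_option synthInstance.maxHeartbeats 400000 in
open TensorProduct in
theorem ttt_nat {M N P Q M' N' P' Q' : Type}
    [AddCommGroup M] [Module K M] [AddCommGroup N] [Module K N]
    [AddCommGroup P] [Module K P] [AddCommGroup Q] [Module K Q]
    [AddCommGroup M'] [Module K M'] [AddCommGroup N'] [Module K N']
    [AddCommGroup P'] [Module K P'] [AddCommGroup Q'] [Module K Q']
    (f : M →ₗ[K] M') (g : N →ₗ[K] N') (h : P →ₗ[K] P') (k : Q →ₗ[K] Q')
    (x : M ⊗[K] N) (y : P ⊗[K] Q) :
    tensorTensorTensorComm K M' N' P' Q' (TensorProduct.map f g x ⊗ₜ[K] TensorProduct.map h k y) =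
      TensorProduct.map (TensorProduct.map f h) (TensorProduct.map g k)
        (tensorTensorTensorComm K M N P Q (x ⊗ₜ[K] y)) := by
  induction x using TensorProduct.induction_on with
  | zero => simp
  | tmul m n =>
    induction y using TensorProduct.induction_on with
    | zero => simp
    | tmul p q => simp [tensorTensorTensorComm_tmul]
    | add y₁ y₂ h₁ h₂ => simp only [map_add, tmul_add, h₁, h₂]
  | add x₁ x₂ h₁ h₂ => simp only [map_add, add_tmul, h₁, h₂]

open TensorProduct in
theorem lid_nat {M M' : Type} [AddCommGroup M] [Module K M] [AddCommGroup M'] [Module K M']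
    (f : M →ₗ[K] M') (x : K ⊗[K] M) :
    TensorProduct.lid K M' (TensorProduct.map LinearMap.id f x) =
      f (TensorProduct.lid K M x) := by
  induction x using TensorProduct.induction_on with
  | zero => simp
  | tmul r m => simp
  | add a b ha hb => simp only [map_add, ha, hb]

open TensorProduct in
theorem rid_nat {M M' : Type} [AddCommGroup M] [Module K M] [AddCommGroup M'] [Module K M']
    (f : M →ₗ[K] M') (x : M ⊗[K] K) :
    TensorProduct.rid K M' (TensorProduct.map f LinearMap.id x) =
      f (TensorProduct.rid K M x) := by
  induction x using TensorProduct.induction_on with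
  | zero => simp
  | tmul m r => simp
  | add a b ha hb => simp only [map_add, ha, hb]

end AuxGeneric

namespace EBim

variable {K : Type} [Field K] {V : Type} [Fintype V] [DecidableEq V]
  {C : Type} [AddCommGroup C] [Module K C] (B : EBim K V C)

theorem eL_orth' (p q : V × V) (x : C) :
    B.eL p (B.eL q x) = if p = q then B.eL p x else 0 := by
  have h := LinearMap.congr_fun (B.eL_orth p q) x
  split_ifs with hpq <;> simpa [hpq] using h

theorem eR_orth' (p q : V × V) (x : C) :
    B.eR p (B.eR q x) = if p = q then B.eR p x else 0 := by
  have h := LinearMap.congr_fun (B.eR_orth p q) x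
  split_ifs with hpq <;> simpa [hpq] using h

theorem eLR_comm' (p q : V × V) (x : C) : B.eL p (B.eR q x) = B.eR q (B.eL p x) :=
  LinearMap.congr_fun (B.eLR_comm p q) x

theorem sum_eL' (x : C) : ∑ p : V × V, B.eL p x = x := by
  have h := LinearMap.congr_fun B.sum_eL x
  simpa using h

theorem sum_eR' (x : C) : ∑ p : V × V, B.eR p x = x := by
  have h := LinearMap.congr_fun B.sum_eR x
  simpa using h

theorem sum_oL : ∑ l : V, B.oL l = LinearMap.id (R := K) (M := C) := by
  show (∑ l : V, ∑ m : V, B.eL (l, m)) = _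
  rw [← Fintype.sum_prod_type, B.sum_eL]

theorem sum_pL : ∑ m : V, B.pL m = LinearMap.id (R := K) (M := C) := by
  show (∑ m : V, ∑ l : V, B.eL (l, m)) = _
  rw [← Fintype.sum_prod_type_right, B.sum_eL]

theorem sum_oR : ∑ l : V, B.oR l = LinearMap.id (R := K) (M := C) := by
  show (∑ l : V, ∑ m : V, B.eR (l, m)) = _
  rw [← Fintype.sum_prod_type, B.sum_eR]

theorem sum_pR : ∑ m : V, B.pR m = LinearMap.id (R := K) (M := C) := by
  show (∑ m : V, ∑ l : V, B.eR (l, m)) = _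
  rw [← Fintype.sum_prod_type_right, B.sum_eR]

theorem sum_oL' (x : C) : ∑ l : V, B.oL l x = x := by
  have h := LinearMap.congr_fun B.sum_oL x
  simpa using h

theorem sum_pL' (x : C) : ∑ m : V, B.pL m x = x := by
  have h := LinearMap.congr_fun B.sum_pL x
  simpa using h

theorem sum_oR' (x : C) : ∑ l : V, B.oR l x = x := by
  have h := LinearMap.congr_fun B.sum_oR x
  simpa using h

theorem sum_pR' (x : C) : ∑ m : V, B.pR m x = x := by
  have h := LinearMap.congr_fun B.sum_pR x
  simpa using h

theorem oL_pL' (l m : V) (x : C) : B.oL l (B.pL m x) = B.eL (l, m) x := by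
  simp only [oL, pL, LinearMap.sum_apply, map_sum, eL_orth']
  simp [Prod.ext_iff, ite_and, Finset.sum_ite_eq, Finset.sum_ite_eq']

theorem oR_pR' (l m : V) (x : C) : B.oR l (B.pR m x) = B.eR (l, m) x := by
  simp only [oR, pR, LinearMap.sum_apply, map_sum, eR_orth']
  simp [Prod.ext_iff, ite_and, Finset.sum_ite_eq, Finset.sum_ite_eq']

theorem pL_pL' (a b : V) (x : C) : B.pL a (B.pL b x) = if a = b then B.pL a x else 0 := by
  simp only [pL, LinearMap.sum_apply, map_sum, eL_orth', Prod.ext_iff]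
  split_ifs with hab
  · subst hab
    simp [Finset.sum_ite_eq, Finset.sum_ite_eq']
  · simp [hab]

theorem pR_pR' (a b : V) (x : C) : B.pR a (B.pR b x) = if a = b then B.pR a x else 0 := by
  simp only [pR, LinearMap.sum_apply, map_sum, eR_orth', Prod.ext_iff]
  split_ifs with hab
  · subst hab
    simp [Finset.sum_ite_eq, Finset.sum_ite_eq']
  · simp [hab]

theorem oL_oL' (a b : V) (x : C) : B.oL a (B.oL b x) = if a = b then B.oL a x else 0 := by
  simp only [oL, LinearMap.sum_apply, map_sum, eL_orth', Prod.ext_iff]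
  split_ifs with hab
  · subst hab
    simp [Finset.sum_ite_eq, Finset.sum_ite_eq']
  · simp [hab]

theorem oR_oR' (a b : V) (x : C) : B.oR a (B.oR b x) = if a = b then B.oR a x else 0 := by
  simp only [oR, LinearMap.sum_apply, map_sum, eR_orth', Prod.ext_iff]
  split_ifs with hab
  · subst hab
    simp [Finset.sum_ite_eq, Finset.sum_ite_eq']
  · simp [hab]

theorem oL_comp_oL (a : V) : B.oL a ∘ₗ B.oL a = B.oL a :=
  LinearMap.ext fun x => by simp [LinearMap.comp_apply, oL_oL']

theorem pL_comp_pL (a : V) : B.pL a ∘ₗ B.pL a = B.pL a :=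
  LinearMap.ext fun x => by simp [LinearMap.comp_apply, pL_pL']

theorem pR_eR' (n : V) (p : V × V) (x : C) :
    B.pR n (B.eR p x) = if n = p.2 then B.eR p x else 0 := by
  simp only [pR, LinearMap.sum_apply, eR_orth']
  by_cases h : n = p.2
  · subst h
    simp [Prod.ext_iff, ite_and, Finset.sum_ite_eq, Finset.sum_ite_eq']
  · simp [Prod.ext_iff, h]

theorem pL_eL' (n : V) (p : V × V) (x : C) :
    B.pL n (B.eL p x) = if n = p.2 then B.eL p x else 0 := by
  simp only [pL, LinearMap.sum_apply, eL_orth']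
  by_cases h : n = p.2
  · subst h
    simp [Prod.ext_iff, ite_and, Finset.sum_ite_eq, Finset.sum_ite_eq']
  · simp [Prod.ext_iff, h]

theorem oL_oR' (l m : V) (x : C) : B.oL l (B.oR m x) = B.oR m (B.oL l x) := by
  simp only [oL, oR, LinearMap.sum_apply, map_sum, eLR_comm']
  exact Finset.sum_comm

theorem oL_pR' (l n : V) (x : C) : B.oL l (B.pR n x) = B.pR n (B.oL l x) := by
  simp only [oL, pR, LinearMap.sum_apply, map_sum, eLR_comm']
  exact Finset.sum_comm

theorem pL_oR' (n m : V) (x : C) : B.pL n (B.oR m x) = B.oR m (B.pL n x) := by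
  simp only [pL, oR, LinearMap.sum_apply, map_sum, eLR_comm']
  exact Finset.sum_comm

theorem pL_pR' (n m : V) (x : C) : B.pL n (B.pR m x) = B.pR m (B.pL n x) := by
  simp only [pL, pR, LinearMap.sum_apply, map_sum, eLR_comm']
  exact Finset.sum_comm

theorem eL_oR' (p : V × V) (m : V) (x : C) : B.eL p (B.oR m x) = B.oR m (B.eL p x) := by
  simp only [oR, LinearMap.sum_apply, map_sum, eLR_comm']

end EBim
section AuxComp

variable {K : Type} [Field K] {M N P : Type} [AddCommGroup M] [Module K M]
  [AddCommGroup N] [Module K N] [AddCommGroup P] [Module K P]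

theorem lcomp_sum {ι : Type} (s : Finset ι) (f : N →ₗ[K] P) (g : ι → M →ₗ[K] N) :
    f ∘ₗ (∑ i ∈ s, g i) = ∑ i ∈ s, f ∘ₗ g i := by
  apply LinearMap.ext
  intro x
  simp [LinearMap.sum_apply, map_sum]

theorem lsum_comp {ι : Type} (s : Finset ι) (f : ι → N →ₗ[K] P) (g : M →ₗ[K] N) :
    (∑ i ∈ s, f i) ∘ₗ g = ∑ i ∈ s, f i ∘ₗ g := by
  apply LinearMap.ext
  intro x
  simp [LinearMap.sum_apply]

end AuxComp

namespace DressedStruct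

open TensorProduct

variable {K : Type} [Field K] {V : Type} [Fintype V] [DecidableEq V]
  {C : Type} [AddCommGroup C] [Module K C] (DC : DressedStruct K V C)

/-- The `K`-coalgebra structure underlying a dressed coalgebra. -/
def toCoalgebra : Coalgebra K C where
  comul := DC.comul
  counit := DC.counit
  coassoc := LinearMap.ext fun c => DC.coassoc c
  rTensor_counit_comp_comul := by
    apply LinearMap.ext
    intro c
    apply (TensorProduct.lid K C).injective
    show TensorProduct.lid K C (TensorProduct.map DC.counit LinearMap.id (DC.comul c)) = _
    rw [DC.counit_comul c]
    simp [TensorProduct.mk_apply]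
  lTensor_counit_comp_comul := by
    apply LinearMap.ext
    intro c
    apply (TensorProduct.rid K C).injective
    show TensorProduct.rid K C (TensorProduct.map LinearMap.id DC.counit (DC.comul c)) = _
    rw [DC.comul_counit c]
    simp [TensorProduct.mk_apply, TensorProduct.rid_tmul]

theorem comul_eR' (p : V × V) (c : C) :
    DC.comul (DC.toEBim.eR p c) =
      TensorProduct.map (DC.toEBim.oR p.1) (DC.toEBim.pR p.2) (DC.comul c) := by
  conv_lhs => rw [← EBim.sum_eL' DC.toEBim (DC.toEBim.eR p c)]
  rw [map_sum]
  simp_rw [DC.comul_act, TensorProduct.map_comp, LinearMap.comp_apply]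
  rw [← LinearMap.sum_apply, tmap_sum_prod, EBim.sum_oL, EBim.sum_pL, TensorProduct.map_id,
    LinearMap.id_apply]

theorem comul_eL' (p : V × V) (c : C) :
    DC.comul (DC.toEBim.eL p c) =
      TensorProduct.map (DC.toEBim.oL p.1) (DC.toEBim.pL p.2) (DC.comul c) := by
  conv_lhs => rw [← EBim.sum_eR' DC.toEBim c]
  rw [map_sum, map_sum]
  simp_rw [DC.comul_act, TensorProduct.map_comp, LinearMap.comp_apply]
  rw [← map_sum, ← LinearMap.sum_apply, tmap_sum_prod, EBim.sum_oR, EBim.sum_pR,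
    TensorProduct.map_id, LinearMap.id_apply]

theorem comul_pR' (n : V) (c : C) :
    DC.comul (DC.toEBim.pR n c) =
      TensorProduct.map LinearMap.id (DC.toEBim.pR n) (DC.comul c) := by
  show DC.comul ((∑ l : V, DC.toEBim.eR (l, n)) c) = _
  rw [LinearMap.sum_apply, map_sum]
  simp_rw [DC.comul_eR']
  rw [← LinearMap.sum_apply, ← tmap_sum_left]
  show TensorProduct.map (∑ l : V, DC.toEBim.oR l) _ _ = _
  rw [EBim.sum_oR]

theorem comul_pL' (n : V) (c : C) :
    DC.comul (DC.toEBim.pL n c) =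
      TensorProduct.map LinearMap.id (DC.toEBim.pL n) (DC.comul c) := by
  show DC.comul ((∑ l : V, DC.toEBim.eL (l, n)) c) = _
  rw [LinearMap.sum_apply, map_sum]
  simp_rw [DC.comul_eL']
  rw [← LinearMap.sum_apply, ← tmap_sum_left]
  show TensorProduct.map (∑ l : V, DC.toEBim.oL l) _ _ = _
  rw [EBim.sum_oL]

theorem exch_pL' (l : V) (c : C) :
    TensorProduct.map (DC.toEBim.pL l) LinearMap.id (DC.comul c) =
      TensorProduct.map LinearMap.id (DC.toEBim.oL l) (DC.comul c) := by
  have h1 : TensorProduct.map (DC.toEBim.pL l) (LinearMap.id : C →ₗ[K] C)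
      = ∑ m : V, TensorProduct.map (DC.toEBim.pL l ∘ₗ DC.toEBim.pR m) LinearMap.id := by
    rw [← tmap_sum_left]
    congr 1
    rw [← lcomp_sum, EBim.sum_pR, LinearMap.comp_id]
  have h2 : TensorProduct.map (LinearMap.id : C →ₗ[K] C) (DC.toEBim.oL l)
      = ∑ m : V, TensorProduct.map LinearMap.id (DC.toEBim.oL l ∘ₗ DC.toEBim.oR m) := by
    rw [← tmap_sum_right]
    congr 1
    rw [← lcomp_sum, EBim.sum_oR, LinearMap.comp_id]
  rw [h1, h2, LinearMap.sum_apply, LinearMap.sum_apply]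
  exact Finset.sum_congr rfl fun m _ => DC.exch l m c

theorem exch_pR' (m : V) (c : C) :
    TensorProduct.map (DC.toEBim.pR m) LinearMap.id (DC.comul c) =
      TensorProduct.map LinearMap.id (DC.toEBim.oR m) (DC.comul c) := by
  have h1 : TensorProduct.map (DC.toEBim.pR m) (LinearMap.id : C →ₗ[K] C)
      = ∑ l : V, TensorProduct.map (DC.toEBim.pL l ∘ₗ DC.toEBim.pR m) LinearMap.id := by
    rw [← tmap_sum_left]
    congr 1
    rw [← lsum_comp, EBim.sum_pL, LinearMap.id_comp]
  have h2 : TensorProduct.map (LinearMap.id : C →ₗ[K] C) (DC.toEBim.oR m)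
      = ∑ l : V, TensorProduct.map LinearMap.id (DC.toEBim.oL l ∘ₗ DC.toEBim.oR m) := by
    rw [← tmap_sum_right]
    congr 1
    rw [← lsum_comp, EBim.sum_oL, LinearMap.id_comp]
  rw [h1, h2, LinearMap.sum_apply, LinearMap.sum_apply]
  exact Finset.sum_congr rfl fun l _ => DC.exch l m c

theorem counit_eR' (p : V × V) (c : C) :
    DC.counit (DC.toEBim.eR p c) =
      if p.1 = p.2 then DC.counit (DC.toEBim.pR p.2 c) else 0 := by
  conv_lhs => rw [← EBim.sum_oL' DC.toEBim (DC.toEBim.eR p c)]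
  rw [map_sum]
  have h1 : ∀ l : V, DC.counit (DC.toEBim.oL l (DC.toEBim.eR p c)) =
      DC.counit (DC.toEBim.pL l (DC.toEBim.pR p.1 (DC.toEBim.pR p.2 c))) := by
    intro l
    rw [show DC.toEBim.eR p c = DC.toEBim.oR p.1 (DC.toEBim.pR p.2 c) from by
      rw [EBim.oR_pR']]
    exact DC.counit_act l p.1 _
  simp_rw [h1]
  rw [← map_sum, EBim.sum_pL', EBim.pR_pR', apply_ite DC.counit, map_zero]
  split_ifs with h
  · rw [h]
  · rfl

theorem counit_eL' (p : V × V) (c : C) :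
    DC.counit (DC.toEBim.eL p c) =
      if p.1 = p.2 then DC.counit (DC.toEBim.pL p.2 c) else 0 := by
  conv_lhs => rw [← EBim.sum_oR' DC.toEBim (DC.toEBim.eL p c)]
  rw [map_sum]
  have h1 : ∀ m : V, DC.counit (DC.toEBim.oR m (DC.toEBim.eL p c)) =
      DC.counit (DC.toEBim.pL p.1 (DC.toEBim.pR m (DC.toEBim.pL p.2 c))) := by
    intro m
    rw [show DC.toEBim.eL p c = DC.toEBim.oL p.1 (DC.toEBim.pL p.2 c) from by
      rw [EBim.oL_pL'], ← EBim.oL_oR']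
    exact DC.counit_act p.1 m _
  simp_rw [h1]
  rw [← map_sum, ← map_sum, EBim.sum_pR', EBim.pL_pL', apply_ite DC.counit, map_zero]
  split_ifs with h
  · rw [h]
  · rfl

theorem counit_oL' (l : V) (x : C) :
    DC.counit (DC.toEBim.oL l x) = DC.counit (DC.toEBim.pL l x) := by
  show DC.counit ((∑ m : V, DC.toEBim.eL (l, m)) x) = _
  rw [LinearMap.sum_apply, map_sum]
  simp_rw [DC.counit_eL']
  simp [Finset.sum_ite_eq]

theorem counit_oR' (m : V) (x : C) :
    DC.counit (DC.toEBim.oR m x) = DC.counit (DC.toEBim.pR m x) := by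
  show DC.counit ((∑ b : V, DC.toEBim.eR (m, b)) x) = _
  rw [LinearMap.sum_apply, map_sum]
  simp_rw [DC.counit_eR']
  simp [Finset.sum_ite_eq]

end DressedStruct
namespace DTensorAux

open TensorProduct

variable {K : Type} [Field K] {V : Type} [Fintype V] [DecidableEq V]
  {C D : Type} [AddCommGroup C] [Module K C] [AddCommGroup D] [Module K D]
  (DC : DressedStruct K V C) (DD : DressedStruct K V D)

/-- elementwise version of `TensorProduct.map_comp` -/
theorem map_map {M N P Q M' N' : Type} [AddCommGroup M] [Module K M]
    [AddCommGroup N] [Module K N] [AddCommGroup P] [Module K P] [AddCommGroup Q] [Module K Q]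
    [AddCommGroup M'] [Module K M'] [AddCommGroup N'] [Module K N']
    (f₂ : P →ₗ[K] M') (f₁ : M →ₗ[K] P) (g₂ : Q →ₗ[K] N') (g₁ : N →ₗ[K] Q) (x : M ⊗[K] N) :
    TensorProduct.map f₂ g₂ (TensorProduct.map f₁ g₁ x) =
      TensorProduct.map (f₂ ∘ₗ f₁) (g₂ ∘ₗ g₁) x := by
  rw [TensorProduct.map_comp]
  rfl

/-- The quotient map onto `C ⊗_E D`. -/
noncomputable def QM : (C ⊗[K] D) →ₗ[K] DTensor K V DC.toEBim DD.toEBim :=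
  (dbal K V DC.toEBim DD.toEBim).mkQ

theorem q_rel (p : V × V) (c : C) (d : D) :
    QM DC DD (DC.toEBim.eR p c ⊗ₜ[K] d) = QM DC DD (c ⊗ₜ[K] DD.toEBim.eL p d) := by
  show Submodule.Quotient.mk _ = Submodule.Quotient.mk _
  rw [Submodule.Quotient.eq]
  exact Submodule.subset_span ⟨p, c, d, rfl⟩

theorem rel_eR (p : V × V) :
    QM DC DD ∘ₗ TensorProduct.map (DC.toEBim.eR p) LinearMap.id =
      QM DC DD ∘ₗ TensorProduct.map LinearMap.id (DD.toEBim.eL p) :=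
  TensorProduct.ext' fun c d => by
    simp only [LinearMap.comp_apply, map_tmul, LinearMap.id_coe, id_eq]
    exact q_rel DC DD p c d

theorem rel_oR (l : V) :
    QM DC DD ∘ₗ TensorProduct.map (DC.toEBim.oR l) LinearMap.id =
      QM DC DD ∘ₗ TensorProduct.map LinearMap.id (DD.toEBim.oL l) := by
  show QM DC DD ∘ₗ TensorProduct.map (∑ m : V, DC.toEBim.eR (l, m)) LinearMap.id =
      QM DC DD ∘ₗ TensorProduct.map LinearMap.id (∑ m : V, DD.toEBim.eL (l, m))
  rw [tmap_sum_left, tmap_sum_right, lcomp_sum, lcomp_sum]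
  exact Finset.sum_congr rfl fun m _ => rel_eR DC DD (l, m)

theorem rel_pR (n : V) :
    QM DC DD ∘ₗ TensorProduct.map (DC.toEBim.pR n) LinearMap.id =
      QM DC DD ∘ₗ TensorProduct.map LinearMap.id (DD.toEBim.pL n) := by
  show QM DC DD ∘ₗ TensorProduct.map (∑ l : V, DC.toEBim.eR (l, n)) LinearMap.id =
      QM DC DD ∘ₗ TensorProduct.map LinearMap.id (∑ l : V, DD.toEBim.eL (l, n))
  rw [tmap_sum_left, tmap_sum_right, lcomp_sum, lcomp_sum]
  exact Finset.sum_congr rfl fun l _ => rel_eR DC DD (l, n)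

/-- left action of `λ̊μ` on the tensor product. -/
noncomputable def TeL (p : V × V) :
    DTensor K V DC.toEBim DD.toEBim →ₗ[K] DTensor K V DC.toEBim DD.toEBim :=
  Submodule.liftQ _ (QM DC DD ∘ₗ TensorProduct.map (DC.toEBim.eL p) LinearMap.id) <| by
    apply Submodule.span_le.mpr
    rintro z ⟨q, c, d, rfl⟩
    simp only [SetLike.mem_coe, LinearMap.mem_ker, LinearMap.comp_apply, map_sub, map_tmul,
      LinearMap.id_coe, id_eq]
    rw [EBim.eLR_comm', q_rel]
    exact sub_self _

/-- right action of `λ̊μ` on the tensor product. -/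
noncomputable def TeR (p : V × V) :
    DTensor K V DC.toEBim DD.toEBim →ₗ[K] DTensor K V DC.toEBim DD.toEBim :=
  Submodule.liftQ _ (QM DC DD ∘ₗ TensorProduct.map LinearMap.id (DD.toEBim.eR p)) <| by
    apply Submodule.span_le.mpr
    rintro z ⟨q, c, d, rfl⟩
    simp only [SetLike.mem_coe, LinearMap.mem_ker, LinearMap.comp_apply, map_sub, map_tmul,
      LinearMap.id_coe, id_eq]
    rw [q_rel, EBim.eLR_comm']
    exact sub_self _

theorem TeL_comp (p : V × V) : TeL DC DD p ∘ₗ QM DC DD =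
    QM DC DD ∘ₗ TensorProduct.map (DC.toEBim.eL p) LinearMap.id :=
  Submodule.liftQ_mkQ _ _ _

theorem TeR_comp (p : V × V) : TeR DC DD p ∘ₗ QM DC DD =
    QM DC DD ∘ₗ TensorProduct.map LinearMap.id (DD.toEBim.eR p) :=
  Submodule.liftQ_mkQ _ _ _

theorem TeL_mk (p : V × V) (x : C ⊗[K] D) :
    TeL DC DD p (QM DC DD x) = QM DC DD (TensorProduct.map (DC.toEBim.eL p) LinearMap.id x) :=
  LinearMap.congr_fun (TeL_comp DC DD p) x

theorem TeR_mk (p : V × V) (x : C ⊗[K] D) :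
    TeR DC DD p (QM DC DD x) = QM DC DD (TensorProduct.map LinearMap.id (DD.toEBim.eR p) x) :=
  LinearMap.congr_fun (TeR_comp DC DD p) x

/-- The `E`-bimodule structure on the tensor product. -/
noncomputable def TEB : EBim K V (DTensor K V DC.toEBim DD.toEBim) where
  eL := TeL DC DD
  eR := TeR DC DD
  eL_orth := fun p q => by
    apply Submodule.linearMap_qext
    apply TensorProduct.ext'
    intro c d
    show TeL DC DD p (TeL DC DD q (QM DC DD (c ⊗ₜ[K] d))) = _
    rw [TeL_mk, TeL_mk]
    simp only [map_tmul, LinearMap.id_coe, id_eq, EBim.eL_orth']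
    split_ifs with h
    · show _ = TeL DC DD p (QM DC DD (c ⊗ₜ[K] d))
      rw [TeL_mk]
      simp
    · simp only [zero_tmul, map_zero]
      rfl
  eR_orth := fun p q => by
    apply Submodule.linearMap_qext
    apply TensorProduct.ext'
    intro c d
    show TeR DC DD p (TeR DC DD q (QM DC DD (c ⊗ₜ[K] d))) = _
    rw [TeR_mk, TeR_mk]
    simp only [map_tmul, LinearMap.id_coe, id_eq, EBim.eR_orth']
    split_ifs with h
    · show _ = TeR DC DD p (QM DC DD (c ⊗ₜ[K] d))
      rw [TeR_mk]
      simp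
    · simp only [tmul_zero, map_zero]
      rfl
  eLR_comm := fun p q => by
    apply Submodule.linearMap_qext
    apply TensorProduct.ext'
    intro c d
    show TeL DC DD p (TeR DC DD q (QM DC DD (c ⊗ₜ[K] d)))
      = TeR DC DD q (TeL DC DD p (QM DC DD (c ⊗ₜ[K] d)))
    rw [TeL_mk, TeR_mk, TeR_mk, TeL_mk]
    simp
  sum_eL := by
    apply Submodule.linearMap_qext
    apply TensorProduct.ext'
    intro c d
    show (∑ p : V × V, TeL DC DD p) (QM DC DD (c ⊗ₜ[K] d)) = QM DC DD (c ⊗ₜ[K] d)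
    rw [LinearMap.sum_apply]
    simp_rw [TeL_mk, map_tmul, LinearMap.id_coe, id_eq]
    rw [← map_sum, ← sum_tmul, EBim.sum_eL']
  sum_eR := by
    apply Submodule.linearMap_qext
    apply TensorProduct.ext'
    intro c d
    show (∑ p : V × V, TeR DC DD p) (QM DC DD (c ⊗ₜ[K] d)) = QM DC DD (c ⊗ₜ[K] d)
    rw [LinearMap.sum_apply]
    simp_rw [TeR_mk, map_tmul, LinearMap.id_coe, id_eq]
    rw [← map_sum, ← tmul_sum, EBim.sum_eR']

theorem ToL_comp (l : V) : (TEB DC DD).oL l ∘ₗ QM DC DD =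
    QM DC DD ∘ₗ TensorProduct.map (DC.toEBim.oL l) LinearMap.id := by
  show (∑ m : V, TeL DC DD (l, m)) ∘ₗ QM DC DD = _
  rw [lsum_comp]
  simp_rw [TeL_comp]
  rw [← lcomp_sum, ← tmap_sum_left]
  rfl

theorem TpL_comp (n : V) : (TEB DC DD).pL n ∘ₗ QM DC DD =
    QM DC DD ∘ₗ TensorProduct.map (DC.toEBim.pL n) LinearMap.id := by
  show (∑ l : V, TeL DC DD (l, n)) ∘ₗ QM DC DD = _
  rw [lsum_comp]
  simp_rw [TeL_comp]
  rw [← lcomp_sum, ← tmap_sum_left]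
  rfl

theorem ToR_comp (l : V) : (TEB DC DD).oR l ∘ₗ QM DC DD =
    QM DC DD ∘ₗ TensorProduct.map LinearMap.id (DD.toEBim.oR l) := by
  show (∑ m : V, TeR DC DD (l, m)) ∘ₗ QM DC DD = _
  rw [lsum_comp]
  simp_rw [TeR_comp]
  rw [← lcomp_sum, ← tmap_sum_right]
  rfl

theorem TpR_comp (n : V) : (TEB DC DD).pR n ∘ₗ QM DC DD =
    QM DC DD ∘ₗ TensorProduct.map LinearMap.id (DD.toEBim.pR n) := by
  show (∑ l : V, TeR DC DD (l, n)) ∘ₗ QM DC DD = _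
  rw [lsum_comp]
  simp_rw [TeR_comp]
  rw [← lcomp_sum, ← tmap_sum_right]
  rfl

end DTensorAux
namespace DTensorAux

open TensorProduct

variable {K : Type} [Field K] {V : Type} [Fintype V] [DecidableEq V]
  {C D : Type} [AddCommGroup C] [Module K C] [AddCommGroup D] [Module K D]
  (DC : DressedStruct K V C) (DD : DressedStruct K V D)

/-- The comultiplication on `C ⊗ D` before passing to the quotient. -/
noncomputable def Phi : (C ⊗[K] D) →ₗ[K] (C ⊗[K] D) ⊗[K] (C ⊗[K] D) :=
  (TensorProduct.tensorTensorTensorComm K C C D D).toLinearMap ∘ₗ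
    TensorProduct.map DC.comul DD.comul

theorem Phi_tmul (c : C) (d : D) :
    Phi DC DD (c ⊗ₜ[K] d) =
      TensorProduct.tensorTensorTensorComm K C C D D (DC.comul c ⊗ₜ[K] DD.comul d) := by
  simp [Phi]

/-- The plain counit `ε ⊗ ε` on `C ⊗ D`. -/
noncomputable def epsP : (C ⊗[K] D) →ₗ[K] K :=
  LinearMap.mul' K K ∘ₗ TensorProduct.map DC.counit DD.counit

/-- The counit on `C ⊗ D` before passing to the quotient. -/
noncomputable def eps0 : (C ⊗[K] D) →ₗ[K] K :=
  ∑ n : V, LinearMap.mul' K K ∘ₗ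
    TensorProduct.map (DC.counit ∘ₗ DC.toEBim.pR n) (DD.counit ∘ₗ DD.toEBim.pL n)

theorem eps0_tmul (c : C) (d : D) :
    eps0 DC DD (c ⊗ₜ[K] d) =
      ∑ n : V, DC.counit (DC.toEBim.pR n c) * DD.counit (DD.toEBim.pL n d) := by
  simp [eps0, LinearMap.sum_apply, LinearMap.mul'_apply]

theorem Phi_coassoc (x : C ⊗[K] D) :
    TensorProduct.assoc K (C ⊗[K] D) (C ⊗[K] D) (C ⊗[K] D)
        (TensorProduct.map (Phi DC DD) LinearMap.id (Phi DC DD x)) =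
      TensorProduct.map LinearMap.id (Phi DC DD) (Phi DC DD x) := by
  letI : Coalgebra K C := DC.toCoalgebra
  letI : Coalgebra K D := DD.toCoalgebra
  exact Coalgebra.coassoc_apply (R := K) (A := C ⊗[K] D) x

theorem Phi_rTensor_counit (x : C ⊗[K] D) :
    TensorProduct.map (epsP DC DD) LinearMap.id (Phi DC DD x) = (1 : K) ⊗ₜ[K] x := by
  letI : Coalgebra K C := DC.toCoalgebra
  letI : Coalgebra K D := DD.toCoalgebra
  have he : epsP DC DD = CoalgebraStruct.counit (R := K) (A := C ⊗[K] D) :=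
    TensorProduct.ext' fun c d => by simp [epsP, LinearMap.mul'_apply, mul_comm]; rfl
  rw [he]
  exact Coalgebra.rTensor_counit_comul (R := K) (A := C ⊗[K] D) x

theorem Phi_lTensor_counit (x : C ⊗[K] D) :
    TensorProduct.map LinearMap.id (epsP DC DD) (Phi DC DD x) = x ⊗ₜ[K] (1 : K) := by
  letI : Coalgebra K C := DC.toCoalgebra
  letI : Coalgebra K D := DD.toCoalgebra
  have he : epsP DC DD = CoalgebraStruct.counit (R := K) (A := C ⊗[K] D) :=
    TensorProduct.ext' fun c d => by simp [epsP, LinearMap.mul'_apply, mul_comm]; rfl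
  rw [he]
  exact Coalgebra.lTensor_counit_comul (R := K) (A := C ⊗[K] D) x

theorem comul_bal (p : V × V) (c : C) (d : D) :
    TensorProduct.map (QM DC DD) (QM DC DD) (Phi DC DD (DC.toEBim.eR p c ⊗ₜ[K] d)) =
      TensorProduct.map (QM DC DD) (QM DC DD) (Phi DC DD (c ⊗ₜ[K] DD.toEBim.eL p d)) := by
  rw [Phi_tmul, Phi_tmul, DC.comul_eR', DD.comul_eL']
  have h1 := ttt_nat (K := K) (DC.toEBim.oR p.1) (DC.toEBim.pR p.2)
    (LinearMap.id (R := K) (M := D)) (LinearMap.id (R := K) (M := D)) (DC.comul c) (DD.comul d)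
  have h2 := ttt_nat (K := K) (LinearMap.id (R := K) (M := C)) (LinearMap.id (R := K) (M := C))
    (DD.toEBim.oL p.1) (DD.toEBim.pL p.2) (DC.comul c) (DD.comul d)
  rw [TensorProduct.map_id] at h1 h2
  simp only [LinearMap.id_coe, id_eq] at h1 h2
  rw [h1, h2, map_map, map_map, rel_oR, rel_pR]

/-- The comultiplication on `C ⊗_E D`. -/
noncomputable def Tcomul : DTensor K V DC.toEBim DD.toEBim →ₗ[K]
    DTensor K V DC.toEBim DD.toEBim ⊗[K] DTensor K V DC.toEBim DD.toEBim :=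
  Submodule.liftQ _ (TensorProduct.map (QM DC DD) (QM DC DD) ∘ₗ Phi DC DD) <| by
    apply Submodule.span_le.mpr
    rintro z ⟨p, c, d, rfl⟩
    simp only [SetLike.mem_coe, LinearMap.mem_ker, LinearMap.comp_apply, map_sub]
    rw [comul_bal]
    exact sub_self _

theorem Tcomul_comp : Tcomul DC DD ∘ₗ QM DC DD =
    TensorProduct.map (QM DC DD) (QM DC DD) ∘ₗ Phi DC DD :=
  Submodule.liftQ_mkQ _ _ _

theorem Tcomul_mk (x : C ⊗[K] D) :
    Tcomul DC DD (QM DC DD x) = TensorProduct.map (QM DC DD) (QM DC DD) (Phi DC DD x) :=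
  LinearMap.congr_fun (Tcomul_comp DC DD) x

theorem eps_bal (p : V × V) (c : C) (d : D) :
    eps0 DC DD (DC.toEBim.eR p c ⊗ₜ[K] d) = eps0 DC DD (c ⊗ₜ[K] DD.toEBim.eL p d) := by
  rw [eps0_tmul, eps0_tmul]
  simp only [EBim.pR_eR', EBim.pL_eL', apply_ite DC.counit, apply_ite DD.counit, map_zero,
    ite_mul, mul_ite, zero_mul, mul_zero]
  rw [Finset.sum_ite_eq' Finset.univ p.2, Finset.sum_ite_eq' Finset.univ p.2]
  simp only [Finset.mem_univ, if_true]
  rw [DC.counit_eR', DD.counit_eL']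
  split_ifs with h <;> simp

/-- The counit on `C ⊗_E D`. -/
noncomputable def Teps : DTensor K V DC.toEBim DD.toEBim →ₗ[K] K :=
  Submodule.liftQ _ (eps0 DC DD) <| by
    apply Submodule.span_le.mpr
    rintro z ⟨p, c, d, rfl⟩
    simp only [SetLike.mem_coe, LinearMap.mem_ker, map_sub]
    rw [eps_bal]
    exact sub_self _

theorem Teps_comp : Teps DC DD ∘ₗ QM DC DD = eps0 DC DD :=
  Submodule.liftQ_mkQ _ _ _

theorem Teps_mk (x : C ⊗[K] D) : Teps DC DD (QM DC DD x) = eps0 DC DD x :=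
  LinearMap.congr_fun (Teps_comp DC DD) x

theorem Tcoassoc_comp :
    (TensorProduct.assoc K (DTensor K V DC.toEBim DD.toEBim) (DTensor K V DC.toEBim DD.toEBim)
        (DTensor K V DC.toEBim DD.toEBim)).toLinearMap ∘ₗ
      (TensorProduct.map (Tcomul DC DD) LinearMap.id ∘ₗ Tcomul DC DD) =
    TensorProduct.map LinearMap.id (Tcomul DC DD) ∘ₗ Tcomul DC DD := by
  apply Submodule.linearMap_qext
  apply TensorProduct.ext'
  intro c d
  show TensorProduct.assoc K _ _ _
      (TensorProduct.map (Tcomul DC DD) LinearMap.id (Tcomul DC DD (QM DC DD (c ⊗ₜ[K] d))))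
    = TensorProduct.map LinearMap.id (Tcomul DC DD) (Tcomul DC DD (QM DC DD (c ⊗ₜ[K] d)))
  rw [Tcomul_mk]
  have hL : TensorProduct.map (Tcomul DC DD) LinearMap.id
      (TensorProduct.map (QM DC DD) (QM DC DD) (Phi DC DD (c ⊗ₜ[K] d)))
      = TensorProduct.map (TensorProduct.map (QM DC DD) (QM DC DD)) (QM DC DD)
        (TensorProduct.map (Phi DC DD) LinearMap.id (Phi DC DD (c ⊗ₜ[K] d))) := by
    rw [map_map, map_map, Tcomul_comp, LinearMap.id_comp, LinearMap.comp_id]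
  have hR : TensorProduct.map LinearMap.id (Tcomul DC DD)
      (TensorProduct.map (QM DC DD) (QM DC DD) (Phi DC DD (c ⊗ₜ[K] d)))
      = TensorProduct.map (QM DC DD) (TensorProduct.map (QM DC DD) (QM DC DD))
        (TensorProduct.map LinearMap.id (Phi DC DD) (Phi DC DD (c ⊗ₜ[K] d))) := by
    rw [map_map, map_map, Tcomul_comp, LinearMap.id_comp, LinearMap.comp_id]
  rw [hL, hR, ← TensorProduct.map_map_assoc, Phi_coassoc]

theorem Tcounit_left_comp :
    (TensorProduct.lid K (DTensor K V DC.toEBim DD.toEBim)).toLinearMap ∘ₗ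
      (TensorProduct.map (Teps DC DD) LinearMap.id ∘ₗ Tcomul DC DD) = LinearMap.id := by
  apply Submodule.linearMap_qext
  apply TensorProduct.ext'
  intro c d
  show TensorProduct.lid K _
      (TensorProduct.map (Teps DC DD) LinearMap.id (Tcomul DC DD (QM DC DD (c ⊗ₜ[K] d))))
    = QM DC DD (c ⊗ₜ[K] d)
  rw [Tcomul_mk, map_map, Teps_comp, LinearMap.id_comp]
  have key : ∀ n : V,
      TensorProduct.map (LinearMap.mul' K K ∘ₗ
          TensorProduct.map (DC.counit ∘ₗ DC.toEBim.pR n) (DD.counit ∘ₗ DD.toEBim.pL n))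
        (QM DC DD) (Phi DC DD (c ⊗ₜ[K] d))
      = TensorProduct.map (epsP DC DD)
          (QM DC DD ∘ₗ TensorProduct.map LinearMap.id (DD.toEBim.oL n))
          (Phi DC DD (c ⊗ₜ[K] d)) := by
    intro n
    have ha : LinearMap.mul' K K ∘ₗ
        TensorProduct.map (DC.counit ∘ₗ DC.toEBim.pR n) (DD.counit ∘ₗ DD.toEBim.pL n)
        = epsP DC DD ∘ₗ TensorProduct.map (DC.toEBim.pR n) (DD.toEBim.pL n) := by
      rw [epsP, TensorProduct.map_comp, LinearMap.comp_assoc]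
    rw [ha]
    have hb : TensorProduct.map (TensorProduct.map (DC.toEBim.pR n) (DD.toEBim.pL n))
        LinearMap.id (Phi DC DD (c ⊗ₜ[K] d))
        = TensorProduct.map LinearMap.id
            (TensorProduct.map (DC.toEBim.oR n) (DD.toEBim.oL n)) (Phi DC DD (c ⊗ₜ[K] d)) := by
      rw [Phi_tmul]
      have h1 := ttt_nat (K := K) (DC.toEBim.pR n) (LinearMap.id (R := K) (M := C))
        (DD.toEBim.pL n) (LinearMap.id (R := K) (M := D)) (DC.comul c) (DD.comul d)
      have h2 := ttt_nat (K := K) (LinearMap.id (R := K) (M := C)) (DC.toEBim.oR n)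
        (LinearMap.id (R := K) (M := D)) (DD.toEBim.oL n) (DC.comul c) (DD.comul d)
      rw [TensorProduct.map_id] at h1 h2
      rw [← h1, DC.exch_pR', DD.exch_pL', h2]
    have hc : QM DC DD ∘ₗ TensorProduct.map (DC.toEBim.oR n) (DD.toEBim.oL n)
        = QM DC DD ∘ₗ TensorProduct.map LinearMap.id (DD.toEBim.oL n) := by
      have hsplit : TensorProduct.map (DC.toEBim.oR n) (DD.toEBim.oL n)
          = TensorProduct.map (DC.toEBim.oR n) LinearMap.id ∘ₗ
              TensorProduct.map LinearMap.id (DD.toEBim.oL n) := by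
        rw [← TensorProduct.map_comp, LinearMap.comp_id, LinearMap.id_comp]
      rw [hsplit, ← LinearMap.comp_assoc, rel_oR, LinearMap.comp_assoc,
        ← TensorProduct.map_comp, LinearMap.comp_id, EBim.oL_comp_oL]
    calc TensorProduct.map (epsP DC DD ∘ₗ TensorProduct.map (DC.toEBim.pR n) (DD.toEBim.pL n))
            (QM DC DD) (Phi DC DD (c ⊗ₜ[K] d))
        = TensorProduct.map (epsP DC DD) (QM DC DD)
            (TensorProduct.map (TensorProduct.map (DC.toEBim.pR n) (DD.toEBim.pL n))
              LinearMap.id (Phi DC DD (c ⊗ₜ[K] d))) := by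
          rw [map_map, LinearMap.comp_id]
      _ = TensorProduct.map (epsP DC DD) (QM DC DD)
            (TensorProduct.map LinearMap.id
              (TensorProduct.map (DC.toEBim.oR n) (DD.toEBim.oL n))
              (Phi DC DD (c ⊗ₜ[K] d))) := by rw [hb]
      _ = TensorProduct.map (epsP DC DD)
            (QM DC DD ∘ₗ TensorProduct.map (DC.toEBim.oR n) (DD.toEBim.oL n))
            (Phi DC DD (c ⊗ₜ[K] d)) := by rw [map_map, LinearMap.comp_id]
      _ = _ := by rw [hc]
  have hsum : TensorProduct.map (eps0 DC DD) (QM DC DD)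
      = ∑ n : V, TensorProduct.map (LinearMap.mul' K K ∘ₗ
          TensorProduct.map (DC.counit ∘ₗ DC.toEBim.pR n) (DD.counit ∘ₗ DD.toEBim.pL n))
        (QM DC DD) := by
    rw [show eps0 DC DD = ∑ n : V, LinearMap.mul' K K ∘ₗ
      TensorProduct.map (DC.counit ∘ₗ DC.toEBim.pR n) (DD.counit ∘ₗ DD.toEBim.pL n) from rfl,
      tmap_sum_left]
  rw [hsum, LinearMap.sum_apply, map_sum]
  simp_rw [key]
  have term : ∀ n : V,
      TensorProduct.lid K (DTensor K V DC.toEBim DD.toEBim)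
        (TensorProduct.map (epsP DC DD)
          (QM DC DD ∘ₗ TensorProduct.map LinearMap.id (DD.toEBim.oL n))
          (Phi DC DD (c ⊗ₜ[K] d)))
      = QM DC DD (c ⊗ₜ[K] DD.toEBim.oL n d) := by
    intro n
    have hstep : TensorProduct.map (epsP DC DD)
        (QM DC DD ∘ₗ TensorProduct.map LinearMap.id (DD.toEBim.oL n)) (Phi DC DD (c ⊗ₜ[K] d))
        = TensorProduct.map LinearMap.id
            (QM DC DD ∘ₗ TensorProduct.map LinearMap.id (DD.toEBim.oL n))
            (TensorProduct.map (epsP DC DD) LinearMap.id (Phi DC DD (c ⊗ₜ[K] d))) := by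
      rw [map_map, LinearMap.id_comp, LinearMap.comp_id]
    rw [hstep, Phi_rTensor_counit]
    simp
  simp_rw [term]
  rw [← map_sum, ← tmul_sum, EBim.sum_oL']

end DTensorAux
namespace DTensorAux

open TensorProduct

variable {K : Type} [Field K] {V : Type} [Fintype V] [DecidableEq V]
  {C D : Type} [AddCommGroup C] [Module K C] [AddCommGroup D] [Module K D]
  (DC : DressedStruct K V C) (DD : DressedStruct K V D)

theorem Tcounit_right_comp :
    (TensorProduct.rid K (DTensor K V DC.toEBim DD.toEBim)).toLinearMap ∘ₗ
      (TensorProduct.map LinearMap.id (Teps DC DD) ∘ₗ Tcomul DC DD) = LinearMap.id := by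
  apply Submodule.linearMap_qext
  apply TensorProduct.ext'
  intro c d
  show TensorProduct.rid K _
      (TensorProduct.map LinearMap.id (Teps DC DD) (Tcomul DC DD (QM DC DD (c ⊗ₜ[K] d))))
    = QM DC DD (c ⊗ₜ[K] d)
  rw [Tcomul_mk, map_map, Teps_comp, LinearMap.id_comp]
  have hsum : TensorProduct.map (QM DC DD) (eps0 DC DD)
      = ∑ n : V, TensorProduct.map (QM DC DD) (LinearMap.mul' K K ∘ₗ
          TensorProduct.map (DC.counit ∘ₗ DC.toEBim.pR n) (DD.counit ∘ₗ DD.toEBim.pL n)) := by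
    rw [show eps0 DC DD = ∑ n : V, LinearMap.mul' K K ∘ₗ
      TensorProduct.map (DC.counit ∘ₗ DC.toEBim.pR n) (DD.counit ∘ₗ DD.toEBim.pL n) from rfl,
      tmap_sum_right]
  rw [hsum, LinearMap.sum_apply, map_sum]
  have key : ∀ n : V,
      TensorProduct.map (QM DC DD) (LinearMap.mul' K K ∘ₗ
          TensorProduct.map (DC.counit ∘ₗ DC.toEBim.pR n) (DD.counit ∘ₗ DD.toEBim.pL n))
        (Phi DC DD (c ⊗ₜ[K] d))
      = TensorProduct.map (QM DC DD) (epsP DC DD)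
          (Phi DC DD (DC.toEBim.pR n c ⊗ₜ[K] DD.toEBim.pL n d)) := by
    intro n
    have ha : LinearMap.mul' K K ∘ₗ
        TensorProduct.map (DC.counit ∘ₗ DC.toEBim.pR n) (DD.counit ∘ₗ DD.toEBim.pL n)
        = epsP DC DD ∘ₗ TensorProduct.map (DC.toEBim.pR n) (DD.toEBim.pL n) := by
      rw [epsP, TensorProduct.map_comp, LinearMap.comp_assoc]
    rw [ha]
    have hb : TensorProduct.map (QM DC DD)
        (epsP DC DD ∘ₗ TensorProduct.map (DC.toEBim.pR n) (DD.toEBim.pL n))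
        (Phi DC DD (c ⊗ₜ[K] d))
        = TensorProduct.map (QM DC DD) (epsP DC DD)
          (TensorProduct.map LinearMap.id
            (TensorProduct.map (DC.toEBim.pR n) (DD.toEBim.pL n)) (Phi DC DD (c ⊗ₜ[K] d))) := by
      rw [map_map, LinearMap.comp_id]
    rw [hb]
    congr 1
    rw [Phi_tmul, Phi_tmul]
    have h1 := ttt_nat (K := K) (LinearMap.id (R := K) (M := C)) (DC.toEBim.pR n)
      (LinearMap.id (R := K) (M := D)) (DD.toEBim.pL n) (DC.comul c) (DD.comul d)
    rw [TensorProduct.map_id] at h1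
    rw [← h1, ← DC.comul_pR', ← DD.comul_pL']
  simp_rw [key]
  have term : ∀ n : V,
      TensorProduct.rid K (DTensor K V DC.toEBim DD.toEBim)
        (TensorProduct.map (QM DC DD) (epsP DC DD)
          (Phi DC DD (DC.toEBim.pR n c ⊗ₜ[K] DD.toEBim.pL n d)))
      = QM DC DD (DC.toEBim.pR n c ⊗ₜ[K] DD.toEBim.pL n d) := by
    intro n
    have hstep : TensorProduct.map (QM DC DD) (epsP DC DD)
        (Phi DC DD (DC.toEBim.pR n c ⊗ₜ[K] DD.toEBim.pL n d))
        = TensorProduct.map (QM DC DD) LinearMap.id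
            (TensorProduct.map LinearMap.id (epsP DC DD)
              (Phi DC DD (DC.toEBim.pR n c ⊗ₜ[K] DD.toEBim.pL n d))) := by
      rw [map_map, LinearMap.comp_id, LinearMap.id_comp]
    rw [hstep, Phi_lTensor_counit]
    simp
  simp_rw [term]
  have hmove : ∀ n : V, QM DC DD (DC.toEBim.pR n c ⊗ₜ[K] DD.toEBim.pL n d)
      = QM DC DD (c ⊗ₜ[K] DD.toEBim.pL n d) := by
    intro n
    have h := LinearMap.congr_fun (rel_pR DC DD n) (c ⊗ₜ[K] DD.toEBim.pL n d)
    simp only [LinearMap.comp_apply, map_tmul, LinearMap.id_coe, id_eq] at h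
    rw [h, EBim.pL_pL']
    simp
  simp_rw [hmove]
  rw [← map_sum, ← tmul_sum, EBim.sum_pL']

theorem hPLR_comp (l m : V) :
    ((TEB DC DD).pL l ∘ₗ (TEB DC DD).pR m) ∘ₗ QM DC DD =
      QM DC DD ∘ₗ TensorProduct.map (DC.toEBim.pL l) (DD.toEBim.pR m) := by
  rw [LinearMap.comp_assoc, TpR_comp, ← LinearMap.comp_assoc, TpL_comp, LinearMap.comp_assoc,
    ← TensorProduct.map_comp, LinearMap.comp_id, LinearMap.id_comp]

theorem hOLR_comp (l m : V) :
    ((TEB DC DD).oL l ∘ₗ (TEB DC DD).oR m) ∘ₗ QM DC DD =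
      QM DC DD ∘ₗ TensorProduct.map (DC.toEBim.oL l) (DD.toEBim.oR m) := by
  rw [LinearMap.comp_assoc, ToR_comp, ← LinearMap.comp_assoc, ToL_comp, LinearMap.comp_assoc,
    ← TensorProduct.map_comp, LinearMap.comp_id, LinearMap.id_comp]

theorem Texch_comp (l m : V) :
    TensorProduct.map ((TEB DC DD).pL l ∘ₗ (TEB DC DD).pR m) LinearMap.id ∘ₗ Tcomul DC DD =
      TensorProduct.map LinearMap.id ((TEB DC DD).oL l ∘ₗ (TEB DC DD).oR m) ∘ₗ
        Tcomul DC DD := by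
  apply Submodule.linearMap_qext
  apply TensorProduct.ext'
  intro c d
  show TensorProduct.map ((TEB DC DD).pL l ∘ₗ (TEB DC DD).pR m) LinearMap.id
      (Tcomul DC DD (QM DC DD (c ⊗ₜ[K] d)))
    = TensorProduct.map LinearMap.id ((TEB DC DD).oL l ∘ₗ (TEB DC DD).oR m)
      (Tcomul DC DD (QM DC DD (c ⊗ₜ[K] d)))
  rw [Tcomul_mk, map_map, map_map, hPLR_comp, hOLR_comp, LinearMap.id_comp]
  have hL : TensorProduct.map (QM DC DD ∘ₗ TensorProduct.map (DC.toEBim.pL l) (DD.toEBim.pR m))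
      (QM DC DD) (Phi DC DD (c ⊗ₜ[K] d))
      = TensorProduct.map (QM DC DD) (QM DC DD)
        (TensorProduct.map (TensorProduct.map (DC.toEBim.pL l) (DD.toEBim.pR m)) LinearMap.id
          (Phi DC DD (c ⊗ₜ[K] d))) := by
    rw [map_map, LinearMap.comp_id]
  have hR : TensorProduct.map (QM DC DD)
      (QM DC DD ∘ₗ TensorProduct.map (DC.toEBim.oL l) (DD.toEBim.oR m)) (Phi DC DD (c ⊗ₜ[K] d))
      = TensorProduct.map (QM DC DD) (QM DC DD)
        (TensorProduct.map LinearMap.id (TensorProduct.map (DC.toEBim.oL l) (DD.toEBim.oR m))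
          (Phi DC DD (c ⊗ₜ[K] d))) := by
    rw [map_map, LinearMap.comp_id]
  rw [hL, hR]
  congr 1
  rw [Phi_tmul]
  have h1 := ttt_nat (K := K) (DC.toEBim.pL l) (LinearMap.id (R := K) (M := C))
    (DD.toEBim.pR m) (LinearMap.id (R := K) (M := D)) (DC.comul c) (DD.comul d)
  have h2 := ttt_nat (K := K) (LinearMap.id (R := K) (M := C)) (DC.toEBim.oL l)
    (LinearMap.id (R := K) (M := D)) (DD.toEBim.oR m) (DC.comul c) (DD.comul d)
  rw [TensorProduct.map_id] at h1 h2
  rw [← h1, DC.exch_pL', DD.exch_pR', h2]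

theorem Tcomul_act_comp (p q : V × V) :
    Tcomul DC DD ∘ₗ (TeL DC DD p ∘ₗ TeR DC DD q) =
      TensorProduct.map ((TEB DC DD).oL p.1 ∘ₗ (TEB DC DD).oR q.1)
        ((TEB DC DD).pL p.2 ∘ₗ (TEB DC DD).pR q.2) ∘ₗ Tcomul DC DD := by
  apply Submodule.linearMap_qext
  apply TensorProduct.ext'
  intro c d
  show Tcomul DC DD (TeL DC DD p (TeR DC DD q (QM DC DD (c ⊗ₜ[K] d))))
    = TensorProduct.map ((TEB DC DD).oL p.1 ∘ₗ (TEB DC DD).oR q.1)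
        ((TEB DC DD).pL p.2 ∘ₗ (TEB DC DD).pR q.2) (Tcomul DC DD (QM DC DD (c ⊗ₜ[K] d)))
  rw [TeR_mk, TeL_mk, map_map, LinearMap.comp_id, LinearMap.id_comp, Tcomul_mk, Tcomul_mk]
  have hRHS : TensorProduct.map ((TEB DC DD).oL p.1 ∘ₗ (TEB DC DD).oR q.1)
      ((TEB DC DD).pL p.2 ∘ₗ (TEB DC DD).pR q.2)
      (TensorProduct.map (QM DC DD) (QM DC DD) (Phi DC DD (c ⊗ₜ[K] d)))
      = TensorProduct.map (QM DC DD) (QM DC DD)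
        (TensorProduct.map (TensorProduct.map (DC.toEBim.oL p.1) (DD.toEBim.oR q.1))
          (TensorProduct.map (DC.toEBim.pL p.2) (DD.toEBim.pR q.2))
          (Phi DC DD (c ⊗ₜ[K] d))) := by
    rw [map_map, hOLR_comp, hPLR_comp, map_map]
  rw [hRHS]
  congr 1
  rw [map_tmul, Phi_tmul, Phi_tmul, DC.comul_eL', DD.comul_eR']
  exact ttt_nat _ _ _ _ _ _

theorem Tcounit_act_comp (l m : V) :
    Teps DC DD ∘ₗ ((TEB DC DD).oL l ∘ₗ (TEB DC DD).oR m) =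
      Teps DC DD ∘ₗ ((TEB DC DD).pL l ∘ₗ (TEB DC DD).pR m) := by
  apply Submodule.linearMap_qext
  apply TensorProduct.ext'
  intro c d
  show Teps DC DD (((TEB DC DD).oL l ∘ₗ (TEB DC DD).oR m) (QM DC DD (c ⊗ₜ[K] d)))
    = Teps DC DD (((TEB DC DD).pL l ∘ₗ (TEB DC DD).pR m) (QM DC DD (c ⊗ₜ[K] d)))
  have h1 := LinearMap.congr_fun (hOLR_comp DC DD l m) (c ⊗ₜ[K] d)
  have h2 := LinearMap.congr_fun (hPLR_comp DC DD l m) (c ⊗ₜ[K] d)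
  simp only [LinearMap.comp_apply, map_tmul] at h1 h2
  simp only [LinearMap.comp_apply]
  rw [h1, h2, Teps_mk, Teps_mk, eps0_tmul, eps0_tmul]
  refine Finset.sum_congr rfl fun n _ => ?_
  rw [← EBim.oL_pR' DC.toEBim l n c, DC.counit_oL', EBim.pL_oR' DD.toEBim n m d,
    DD.counit_oR', ← EBim.pL_pR' DC.toEBim l n c, EBim.pL_pR' DD.toEBim n m d]

end DTensorAux
namespace DTensorAux

open TensorProduct

variable {K : Type} [Field K] {V : Type} [Fintype V] [DecidableEq V]
  {C D : Type} [AddCommGroup C] [Module K C] [AddCommGroup D] [Module K D]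
  (DC : DressedStruct K V C) (DD : DressedStruct K V D)

/-- The `V`-dressed coalgebra structure on `C ⊗_E D`. -/
noncomputable def DT : DressedStruct K V (DTensor K V DC.toEBim DD.toEBim) where
  toEBim := TEB DC DD
  comul := Tcomul DC DD
  counit := Teps DC DD
  coassoc := fun t => LinearMap.congr_fun (Tcoassoc_comp DC DD) t
  counit_comul := fun t => LinearMap.congr_fun (Tcounit_left_comp DC DD) t
  comul_counit := fun t => LinearMap.congr_fun (Tcounit_right_comp DC DD) t
  comul_act := fun p q t => LinearMap.congr_fun (Tcomul_act_comp DC DD p q) t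
  exch := fun l m t => LinearMap.congr_fun (Texch_comp DC DD l m) t
  counit_act := fun l m t => LinearMap.congr_fun (Tcounit_act_comp DC DD l m) t

end DTensorAux
section Stmt6

variable {K : Type} [Field K] {V : Type} [Fintype V] [DecidableEq V]

/-- the tensor product `C ⊗_E D` of two `V`-dressed coalgebras,
with `Δ(c ⊗_E d) = Σ (c₍₁₎ ⊗_E d₍₁₎) ⊗ (c₍₂₎ ⊗_E d₍₂₎)` and
`ε(c ⊗_E d) = Σ_ν ε(cν) ε(νd)`, is a well-defined `V`-dressed coalgebra. -/
theorem dressed_tensor {C D : Type} [AddCommGroup C] [Module K C]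
    [AddCommGroup D] [Module K D]
    (DC : DressedStruct K V C) (DD : DressedStruct K V D) :
    ∃ DT : DressedStruct K V (DTensor K V DC.toEBim DD.toEBim),
      IsDTensorStruct K V DC DD DT := by
  refine ⟨DTensorAux.DT DC DD, ?_, ?_, ?_, ?_⟩
  · intro c d
    have h := DTensorAux.Tcomul_mk DC DD (c ⊗ₜ[K] d)
    rw [DTensorAux.Phi_tmul] at h
    exact h
  · intro c d
    exact (DTensorAux.Teps_mk DC DD (c ⊗ₜ[K] d)).trans (DTensorAux.eps0_tmul DC DD c d)
  · intro p c d
    exact DTensorAux.TeL_mk DC DD p (c ⊗ₜ[K] d)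
  · intro p c d
    exact DTensorAux.TeR_mk DC DD p (c ⊗ₜ[K] d)

end Stmt6
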